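/- Let f(x) = Σ_{h ∈ H_1} w^{(1)}_h Π_{v∈h} x_v be a multilinear polynomial of total power q_1 over variables indexed by {1,...,n} with nonnegative weights, and let g(x) = Σ_{h ∈ H_2} w^{(2)}_h Π_{v∈h} x_v be a multilinear polynomial of total power q_2 over variables indexed by {n+1,...,m} with nonnegative weights. Let X_1, ..., X_m be independent random variables taking values in {0,1}. Then the product polynomial fg, defined by (fg)(x_1,...,x_m) = f(x_1,...,x_n)·g(x_{n+1},...,x_m) (whose monomials are indexed by disjoint unions h_1 ∪ h_2 with h_1 ∈ H_1, h_2 ∈ H_2 and weight w^{(1)}_{h_1}·w^{(2)}_{h_2}), satisfies for every integer i ≥ 0: μ_i(fg, X) = max over integers i_1 with 0 ≤ i_1 ≤ q_1 and 0 ≤ i − i_1 ≤ q_2 of μ_{i_1}(f, X_1,...,X_n) · μ_{i−i_1}(g, X_{n+1},...,X_m). -/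

import Mathlib

/-!
Let the variables of `f` be those satisfying a predicate `p`, and those of `g` the rest. Then a
monomial `h₁ ∪ h₂` of `fg` contains `h₀` exactly when `h₁` contains the `p`-part `A` of `h₀` and
`h₂` its `¬p`-part `B`. Hence the sum defining `μ` at `h₀` factors as the sum for `f` at `A` times
the sum for `g` at `B`, and maximising over `|h₀| = i` amounts to choosing `i₁ = |A|`. With
nonnegative weights, a factor can only be nonzero when `A` (resp. `B`) lies in some monomial,
which forces `|A| ≤ q₁` and `|B| ≤ q₂`; all other splittings contribute `0`.
-/

open MeasureTheory ProbabilityTheory Finset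

/-- The smoothness parameter `μ_r` of a multilinear polynomial `Σ_{h ∈ H} w_h Π_{v ∈ h} x_v`
with respect to random variables `Y`: the maximum, over subsets `h₀` of the vertex set of
cardinality `r`, of `Σ_{h ∈ H, h ⊇ h₀} w_h Π_{v ∈ h \ h₀} E[|Y_v|]`. -/
noncomputable def muMulti {Ω : Type*} [MeasurableSpace Ω] (P : Measure Ω) {m : ℕ}
    (H : Finset (Finset (Fin m))) (w : Finset (Fin m) → ℝ) (Y : Fin m → Ω → ℝ) (r : ℕ) : ℝ :=
  sSup {x : ℝ | ∃ h₀ : Finset (Fin m), h₀.card = r ∧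
    x = ∑ h ∈ H.filter (fun h => h₀ ⊆ h), w h * ∏ v ∈ h \ h₀, ∫ ω, |Y v ω| ∂P}

namespace Finset

variable {α : Type*} (p : α → Prop) [DecidablePred p]

theorem filter_union_of_forall {s t : Finset α} [DecidableEq α]
    (hs : ∀ v ∈ s, p v) (ht : ∀ v ∈ t, ¬ p v) : (s ∪ t).filter p = s := by
  rw [filter_union, filter_true_of_mem hs, filter_false_of_mem ht, union_empty]

theorem filter_not_union_of_forall {s t : Finset α} [DecidableEq α]
    (hs : ∀ v ∈ s, p v) (ht : ∀ v ∈ t, ¬ p v) : (s ∪ t).filter (¬ p ·) = t := by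
  rw [filter_union, filter_false_of_mem (by simpa using hs), filter_true_of_mem ht, empty_union]

theorem subset_iff_filter_subset_and_filter_not_subset {s t : Finset α} :
    s ⊆ t ↔ s.filter p ⊆ t.filter p ∧ s.filter (¬ p ·) ⊆ t.filter (¬ p ·) := by
  refine ⟨fun h => ⟨filter_subset_filter _ h, filter_subset_filter _ h⟩, fun ⟨hp, hnp⟩ v hv => ?_⟩
  by_cases hv' : p v
  · exact (mem_filter.1 (hp (mem_filter.2 ⟨hv, hv'⟩))).1
  · exact (mem_filter.1 (hnp (mem_filter.2 ⟨hv, hv'⟩))).1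

theorem prod_sdiff_eq_prod_filter_sdiff_mul {M : Type*} [CommMonoid M] [DecidableEq α]
    (s t : Finset α) (f : α → M) :
    ∏ v ∈ s \ t, f v =
      (∏ v ∈ s.filter p \ t.filter p, f v) * ∏ v ∈ s.filter (¬ p ·) \ t.filter (¬ p ·), f v := by
  rw [← prod_filter_mul_prod_filter_not (s \ t) p]
  congr 2 <;> ext v <;> simp only [mem_filter, mem_sdiff] <;> tauto

end Finset

noncomputable def muSum {Ω : Type*} [MeasurableSpace Ω] (P : Measure Ω) {α : Type*} [DecidableEq α]
    (H : Finset (Finset α)) (w : Finset α → ℝ) (Y : α → Ω → ℝ) (h₀ : Finset α) : ℝ :=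
  ∑ h ∈ H.filter (fun h => h₀ ⊆ h), w h * ∏ v ∈ h \ h₀, ∫ ω, |Y v ω| ∂P

section muSum

variable {Ω : Type*} [MeasurableSpace Ω] (P : Measure Ω) {α : Type*} [DecidableEq α]
  {H : Finset (Finset α)} {w : Finset α → ℝ} (Y : α → Ω → ℝ)

theorem muSum_nonneg (hw : ∀ h ∈ H, 0 ≤ w h) (h₀ : Finset α) : 0 ≤ muSum P H w Y h₀ :=
  sum_nonneg fun h hh => mul_nonneg (hw h (mem_filter.1 hh).1)
    (prod_nonneg fun _ _ => integral_nonneg fun _ => abs_nonneg _)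

theorem exists_mem_superset_of_muSum_ne_zero {h₀ : Finset α} (h : muSum P H w Y h₀ ≠ 0) :
    ∃ g ∈ H, h₀ ⊆ g := by
  obtain ⟨g, hg, -⟩ := exists_ne_zero_of_sum_ne_zero h
  exact ⟨g, mem_filter.1 hg⟩

theorem muSum_image_union {H₁ H₂ : Finset (Finset α)} (w₁ w₂ : Finset α → ℝ)
    (p : α → Prop) [DecidablePred p]
    (hH₁ : ∀ h ∈ H₁, ∀ v ∈ h, p v) (hH₂ : ∀ h ∈ H₂, ∀ v ∈ h, ¬ p v) (h₀ : Finset α) :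
    muSum P ((H₁ ×ˢ H₂).image fun e => e.1 ∪ e.2)
        (fun h => w₁ (h.filter p) * w₂ (h.filter (¬ p ·))) Y h₀ =
      muSum P H₁ w₁ Y (h₀.filter p) * muSum P H₂ w₂ Y (h₀.filter (¬ p ·)) := by
  have hinj : Set.InjOn (fun e : Finset α × Finset α => e.1 ∪ e.2) ↑(H₁ ×ˢ H₂) := by
    rintro ⟨a₁, a₂⟩ ha ⟨b₁, b₂⟩ hb hab
    simp only [coe_product, Set.mem_prod, mem_coe] at ha hb
    refine Prod.ext ?_ ?_
    · rw [← filter_union_of_forall p (hH₁ _ ha.1) (hH₂ _ ha.2), ← filter_union_of_forall p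
        (hH₁ _ hb.1) (hH₂ _ hb.2)]
      exact congrArg (filter p) hab
    · rw [← filter_not_union_of_forall p (hH₁ _ ha.1) (hH₂ _ ha.2), ← filter_not_union_of_forall p
        (hH₁ _ hb.1) (hH₂ _ hb.2)]
      exact congrArg (filter (¬ p ·)) hab
  simp only [muSum, sum_filter]
  rw [sum_image hinj, sum_mul_sum, ← sum_product']
  refine sum_congr rfl fun e he => ?_
  obtain ⟨he₁, he₂⟩ := mem_product.1 he
  rw [if_congr (subset_iff_filter_subset_and_filter_not_subset p) rfl rfl,
    prod_sdiff_eq_prod_filter_sdiff_mul p,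
    filter_union_of_forall p (hH₁ _ he₁) (hH₂ _ he₂),
    filter_not_union_of_forall p (hH₁ _ he₁) (hH₂ _ he₂), ite_zero_mul_ite_zero, mul_mul_mul_comm]

end muSum

section muMulti

variable {Ω : Type*} [MeasurableSpace Ω] (P : Measure Ω) {m : ℕ}
  {H : Finset (Finset (Fin m))} {w : Finset (Fin m) → ℝ} (Y : Fin m → Ω → ℝ)

theorem muMulti_set_finite (r : ℕ) :
    {x : ℝ | ∃ h₀ : Finset (Fin m), #h₀ = r ∧ x = muSum P H w Y h₀}.Finite :=
  (Set.finite_range (muSum P H w Y)).subset (by rintro _ ⟨h₀, -, rfl⟩; exact ⟨h₀, rfl⟩)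

theorem muSum_le_muMulti (h₀ : Finset (Fin m)) : muSum P H w Y h₀ ≤ muMulti P H w Y #h₀ :=
  le_csSup (muMulti_set_finite P Y _).bddAbove ⟨h₀, rfl, rfl⟩

theorem muMulti_le {r : ℕ} {c : ℝ} (hc : 0 ≤ c) (h : ∀ h₀, #h₀ = r → muSum P H w Y h₀ ≤ c) :
    muMulti P H w Y r ≤ c :=
  Real.sSup_le (by rintro _ ⟨h₀, hr, rfl⟩; exact h h₀ hr) hc

theorem muMulti_nonneg (hS : ∀ h₀, 0 ≤ muSum P H w Y h₀) (r : ℕ) : 0 ≤ muMulti P H w Y r :=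
  Real.sSup_nonneg (by rintro _ ⟨h₀, -, rfl⟩; exact hS h₀)

theorem exists_muSum_eq_muMulti {r : ℕ} (h : muMulti P H w Y r ≠ 0) :
    ∃ h₀ : Finset (Fin m), #h₀ = r ∧ muSum P H w Y h₀ = muMulti P H w Y r := by
  have hne : {x : ℝ | ∃ h₀ : Finset (Fin m), #h₀ = r ∧ x = muSum P H w Y h₀}.Nonempty :=
    Set.nonempty_iff_ne_empty.2 fun he => h ((congrArg sSup he).trans Real.sSup_empty)
  obtain ⟨h₀, hr, hx⟩ := hne.csSup_mem (muMulti_set_finite P Y r)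
  exact ⟨h₀, hr, hx.symm⟩

variable {H₁ H₂ : Finset (Finset (Fin m))} {w₁ w₂ : Finset (Fin m) → ℝ} (p : Fin m → Prop)
  [DecidablePred p] {q₁ q₂ : ℕ}

theorem muMulti_image_union_le (hH₁ : ∀ h ∈ H₁, ∀ v ∈ h, p v) (hH₂ : ∀ h ∈ H₂, ∀ v ∈ h, ¬ p v)
    (hq₁ : ∀ h ∈ H₁, #h ≤ q₁) (hq₂ : ∀ h ∈ H₂, #h ≤ q₂)
    (hw₁ : ∀ h ∈ H₁, 0 ≤ w₁ h) (hw₂ : ∀ h ∈ H₂, 0 ≤ w₂ h) (i : ℕ) :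
    muMulti P ((H₁ ×ˢ H₂).image fun e => e.1 ∪ e.2)
        (fun h => w₁ (h.filter p) * w₂ (h.filter (¬ p ·))) Y i ≤
      sSup {x : ℝ | ∃ i₁ : ℕ, i₁ ≤ q₁ ∧ i₁ ≤ i ∧ i - i₁ ≤ q₂ ∧
        x = muMulti P H₁ w₁ Y i₁ * muMulti P H₂ w₂ Y (i - i₁)} := by
  set R := {x : ℝ | ∃ i₁ : ℕ, i₁ ≤ q₁ ∧ i₁ ≤ i ∧ i - i₁ ≤ q₂ ∧
    x = muMulti P H₁ w₁ Y i₁ * muMulti P H₂ w₂ Y (i - i₁)}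
  have hR_bdd : BddAbove R := ((Set.finite_Iic i).image fun i₁ =>
    muMulti P H₁ w₁ Y i₁ * muMulti P H₂ w₂ Y (i - i₁)).bddAbove.mono
      (by rintro _ ⟨i₁, -, hi, -, rfl⟩; exact ⟨i₁, hi, rfl⟩)
  have hR_nonneg : 0 ≤ sSup R := Real.sSup_nonneg <| by
    rintro _ ⟨i₁, -, -, -, rfl⟩
    exact mul_nonneg (muMulti_nonneg P Y (muSum_nonneg P Y hw₁) _)
      (muMulti_nonneg P Y (muSum_nonneg P Y hw₂) _)
  refine muMulti_le P Y hR_nonneg fun h₀ hi => ?_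
  rw [muSum_image_union P Y w₁ w₂ p hH₁ hH₂]
  set A := h₀.filter p
  set B := h₀.filter (¬ p ·)
  by_cases hAB : muSum P H₁ w₁ Y A * muSum P H₂ w₂ Y B = 0
  · exact hAB ▸ hR_nonneg
  obtain ⟨hA, hB⟩ := mul_ne_zero_iff.1 hAB
  obtain ⟨g₁, hg₁, hAg₁⟩ := exists_mem_superset_of_muSum_ne_zero P Y hA
  obtain ⟨g₂, hg₂, hBg₂⟩ := exists_mem_superset_of_muSum_ne_zero P Y hB
  have hcard : #A + #B = i := hi ▸ card_filter_add_card_filter_not p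
  have hA_le : #A ≤ q₁ := (card_le_card hAg₁).trans (hq₁ g₁ hg₁)
  have hB_le : #B ≤ q₂ := (card_le_card hBg₂).trans (hq₂ g₂ hg₂)
  calc muSum P H₁ w₁ Y A * muSum P H₂ w₂ Y B
      ≤ muMulti P H₁ w₁ Y #A * muMulti P H₂ w₂ Y (i - #A) := by
        rw [show i - #A = #B by omega]
        exact mul_le_mul (muSum_le_muMulti P Y A) (muSum_le_muMulti P Y B)
          (muSum_nonneg P Y hw₂ B) (muMulti_nonneg P Y (muSum_nonneg P Y hw₁) _)
    _ ≤ sSup R := le_csSup hR_bdd ⟨#A, hA_le, by omega, by omega, rfl⟩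

theorem le_muMulti_image_union (hH₁ : ∀ h ∈ H₁, ∀ v ∈ h, p v) (hH₂ : ∀ h ∈ H₂, ∀ v ∈ h, ¬ p v)
    (hw₁ : ∀ h ∈ H₁, 0 ≤ w₁ h) (hw₂ : ∀ h ∈ H₂, 0 ≤ w₂ h) (i : ℕ) :
    sSup {x : ℝ | ∃ i₁ : ℕ, i₁ ≤ q₁ ∧ i₁ ≤ i ∧ i - i₁ ≤ q₂ ∧
        x = muMulti P H₁ w₁ Y i₁ * muMulti P H₂ w₂ Y (i - i₁)} ≤
      muMulti P ((H₁ ×ˢ H₂).image fun e => e.1 ∪ e.2)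
        (fun h => w₁ (h.filter p) * w₂ (h.filter (¬ p ·))) Y i := by
  have hS_nonneg : ∀ h₀, 0 ≤ muSum P ((H₁ ×ˢ H₂).image fun e => e.1 ∪ e.2)
      (fun h => w₁ (h.filter p) * w₂ (h.filter (¬ p ·))) Y h₀ := fun h₀ => by
    rw [muSum_image_union P Y w₁ w₂ p hH₁ hH₂]
    exact mul_nonneg (muSum_nonneg P Y hw₁ _) (muSum_nonneg P Y hw₂ _)
  refine Real.sSup_le ?_ (muMulti_nonneg P Y hS_nonneg i)
  rintro _ ⟨i₁, -, hi₁, -, rfl⟩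
  by_cases h : muMulti P H₁ w₁ Y i₁ * muMulti P H₂ w₂ Y (i - i₁) = 0
  · exact h ▸ muMulti_nonneg P Y hS_nonneg i
  obtain ⟨h₁, h₂⟩ := mul_ne_zero_iff.1 h
  obtain ⟨A, hA_card, hA⟩ := exists_muSum_eq_muMulti P Y h₁
  obtain ⟨B, hB_card, hB⟩ := exists_muSum_eq_muMulti P Y h₂
  obtain ⟨g₁, hg₁, hAg₁⟩ := exists_mem_superset_of_muSum_ne_zero P Y (hA ▸ h₁)
  obtain ⟨g₂, hg₂, hBg₂⟩ := exists_mem_superset_of_muSum_ne_zero P Y (hB ▸ h₂)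
  have hA_p : ∀ v ∈ A, p v := fun v hv => hH₁ g₁ hg₁ v (hAg₁ hv)
  have hB_p : ∀ v ∈ B, ¬ p v := fun v hv => hH₂ g₂ hg₂ v (hBg₂ hv)
  have hcard : #(A ∪ B) = i := by
    rw [← card_filter_add_card_filter_not (s := A ∪ B) p, filter_union_of_forall p hA_p hB_p,
      filter_not_union_of_forall p hA_p hB_p]
    omega
  calc muMulti P H₁ w₁ Y i₁ * muMulti P H₂ w₂ Y (i - i₁)
      = muSum P ((H₁ ×ˢ H₂).image fun e => e.1 ∪ e.2)
          (fun h => w₁ (h.filter p) * w₂ (h.filter (¬ p ·))) Y (A ∪ B) := by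
        rw [muSum_image_union P Y w₁ w₂ p hH₁ hH₂, filter_union_of_forall p hA_p hB_p,
          filter_not_union_of_forall p hA_p hB_p, hA, hB]
    _ ≤ _ := hcard ▸ muSum_le_muMulti P Y (A ∪ B)

theorem muMulti_image_union (hH₁ : ∀ h ∈ H₁, ∀ v ∈ h, p v) (hH₂ : ∀ h ∈ H₂, ∀ v ∈ h, ¬ p v)
    (hq₁ : ∀ h ∈ H₁, #h ≤ q₁) (hq₂ : ∀ h ∈ H₂, #h ≤ q₂)
    (hw₁ : ∀ h ∈ H₁, 0 ≤ w₁ h) (hw₂ : ∀ h ∈ H₂, 0 ≤ w₂ h) (i : ℕ) :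
    muMulti P ((H₁ ×ˢ H₂).image fun e => e.1 ∪ e.2)
        (fun h => w₁ (h.filter p) * w₂ (h.filter (¬ p ·))) Y i =
      sSup {x : ℝ | ∃ i₁ : ℕ, i₁ ≤ q₁ ∧ i₁ ≤ i ∧ i - i₁ ≤ q₂ ∧
        x = muMulti P H₁ w₁ Y i₁ * muMulti P H₂ w₂ Y (i - i₁)} :=
  le_antisymm (muMulti_image_union_le P Y p hH₁ hH₂ hq₁ hq₂ hw₁ hw₂ i)
    (le_muMulti_image_union P Y p hH₁ hH₂ hw₁ hw₂ i)

end muMulti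

theorem mu_of_product_general (Ω : Type) [MeasurableSpace Ω] (P : Measure Ω)
    (n m : ℕ) (q₁ q₂ : ℕ)
    (H₁ H₂ : Finset (Finset (Fin m))) (w₁ w₂ : Finset (Fin m) → ℝ)
    (hV₁ : ∀ h ∈ H₁, ∀ v ∈ h, (v : ℕ) < n)
    (hV₂ : ∀ h ∈ H₂, ∀ v ∈ h, n ≤ (v : ℕ))
    (hq₁ : ∀ h ∈ H₁, h.card ≤ q₁) (hq₂ : ∀ h ∈ H₂, h.card ≤ q₂)
    (hw₁ : ∀ h ∈ H₁, 0 ≤ w₁ h) (hw₂ : ∀ h ∈ H₂, 0 ≤ w₂ h)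
    (X : Fin m → Ω → ℝ) :
    ∀ i : ℕ,
      muMulti P ((H₁ ×ˢ H₂).image fun p => p.1 ∪ p.2)
        (fun h => w₁ (h.filter fun v => (v : ℕ) < n) * w₂ (h.filter fun v => n ≤ (v : ℕ)))
        X i =
      sSup {x : ℝ | ∃ i₁ : ℕ, i₁ ≤ q₁ ∧ i₁ ≤ i ∧ i - i₁ ≤ q₂ ∧
        x = muMulti P H₁ w₁ X i₁ * muMulti P H₂ w₂ X (i - i₁)} := by
  have h_not_lt : ∀ s : Finset (Fin m),
      s.filter (fun v : Fin m => n ≤ (v : ℕ)) = s.filter (fun v : Fin m => ¬ (v : ℕ) < n) :=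
    fun s => filter_congr fun _ _ => not_lt.symm
  simp only [h_not_lt]
  exact muMulti_image_union P X (fun v => (v : ℕ) < n) hV₁
    (fun h hh v hv => not_lt.2 (hV₂ h hh v hv)) hq₁ hq₂ hw₁ hw₂

/-- `μ_i` of a product of two multilinear polynomials over disjoint sets of variables:
`f` uses the variables `{0,…,n-1}` and `g` the variables `{n,…,m-1}`.  The product
polynomial has hyperedges `h₁ ∪ h₂` (for `h₁ ∈ H₁`, `h₂ ∈ H₂`) with weight
`w₁(h₁)·w₂(h₂)`. -/
theorem mu_of_product (Ω : Type) [MeasurableSpace Ω] (P : Measure Ω) [IsProbabilityMeasure P]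
    (n m : ℕ) (hnm : n ≤ m) (q₁ q₂ : ℕ)
    (H₁ H₂ : Finset (Finset (Fin m))) (w₁ w₂ : Finset (Fin m) → ℝ)
    (hV₁ : ∀ h ∈ H₁, ∀ v ∈ h, (v : ℕ) < n)
    (hV₂ : ∀ h ∈ H₂, ∀ v ∈ h, n ≤ (v : ℕ))
    (hq₁ : ∀ h ∈ H₁, h.card ≤ q₁) (hq₂ : ∀ h ∈ H₂, h.card ≤ q₂)
    (hw₁ : ∀ h ∈ H₁, 0 ≤ w₁ h) (hw₂ : ∀ h ∈ H₂, 0 ≤ w₂ h)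
    (X : Fin m → Ω → ℝ)
    (hmeas : ∀ v, Measurable (X v))
    (hindep : iIndepFun X P)
    (h01 : ∀ v ω, X v ω = 0 ∨ X v ω = 1) :
    ∀ i : ℕ,
      muMulti P ((H₁ ×ˢ H₂).image fun p => p.1 ∪ p.2)
        (fun h => w₁ (h.filter fun v => (v : ℕ) < n) * w₂ (h.filter fun v => n ≤ (v : ℕ)))
        X i =
      sSup {x : ℝ | ∃ i₁ : ℕ, i₁ ≤ q₁ ∧ i₁ ≤ i ∧ i - i₁ ≤ q₂ ∧
        x = muMulti P H₁ w₁ X i₁ * muMulti P H₂ w₂ X (i - i₁)} :=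
  mu_of_product_general Ω P n m q₁ q₂ H₁ H₂ w₁ w₂ hV₁ hV₂ hq₁ hq₂ hw₁ hw₂ X
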